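/- (Theorem 3, orthogonality of projections) Let G be a finite group, V a finite-dimensional complex representation of G, and X and Y two irreducible finite-dimensional complex representations of G that are not isomorphic. Let P_X = (dim X / |G|) · ∑_{g ∈ G} χ_X(g⁻¹) · (V.ρ g) and P_Y = (dim Y / |G|) · ∑_{g ∈ G} χ_Y(g⁻¹) · (V.ρ g) be the corresponding projection endomorphisms of V. Then P_X ∘ P_Y = 0. -/

import Mathlib

open CategoryTheory


variable {G : Type} [Group G] [Fintype G]

lemma aux_S_zero (X Y : FDRep ℂ G) [Simple X] [Simple Y] (h : ¬ Nonempty (X ≅ Y)) :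
    (∑ g : G, X.character g⁻¹ • Y.ρ g) = 0 := by
  classical
  set S : Module.End ℂ Y := ∑ g : G, X.character g⁻¹ • Y.ρ g with hS
  have comm : ∀ s : G, Y.ρ s * S = S * Y.ρ s := by
    intro s
    rw [hS, Finset.mul_sum, Finset.sum_mul]
    refine Fintype.sum_equiv ((Equiv.mulRight s⁻¹).trans (Equiv.mulLeft s)) _ _ ?_
    intro g
    simp only [Equiv.trans_apply, Equiv.coe_mulRight, Equiv.coe_mulLeft]
    rw [mul_smul_comm, smul_mul_assoc]
    rw [show X.character (s * (g * s⁻¹))⁻¹ = X.character g⁻¹ by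
      rw [show (s * (g * s⁻¹))⁻¹ = s * g⁻¹ * s⁻¹ by group, FDRep.char_conj]]
    congr 1
    rw [← map_mul, ← map_mul]
    congr 1
    group
  let φ : Y ⟶ Y := ⟨FGModuleCat.ofHom S, fun s => by
    ext x; exact (LinearMap.congr_fun (comm s) x).symm⟩
  obtain ⟨c, hc⟩ := endomorphism_simple_eq_smul_id (𝕜 := ℂ) φ
  have hSc : S = c • LinearMap.id := by
    have := congrArg (fun f : Y ⟶ Y => f.hom.hom.hom) hc
    exact this.symm
  have htr : LinearMap.trace ℂ Y S = ∑ g : G, X.character g⁻¹ * Y.character g := by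
    rw [hS, map_sum]
    exact Finset.sum_congr rfl fun g _ => by rw [LinearMap.map_smul, smul_eq_mul]; rfl
  have horth : ∑ g : G, X.character g⁻¹ * Y.character g = 0 := by
    have card_ne : (Fintype.card G : ℂ) ≠ 0 := Nat.cast_ne_zero.mpr Fintype.card_ne_zero
    letI : Fintype G := ‹Fintype G›
    letI : Invertible ((Nat.card G) : ℂ) := by
      refine invertibleOfNonzero ?_
      exact Nat.cast_ne_zero.mpr Nat.card_pos.ne'
    have h' : ¬ Nonempty (Y ≅ X) := fun ⟨e⟩ => h ⟨e.symm⟩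
    have horth0 := FDRep.char_orthonormal (k := ℂ) (G := G) Y X
    rw [if_neg h'] at horth0
    have h2 : (∑ g : G, Y.character g * X.character g⁻¹) = 0 := by
      have h3 := congrArg (fun z => ((Nat.card G) : ℂ) * z) horth0
      simpa [mul_smul_comm, smul_eq_mul, mul_invOf_self, ← mul_assoc] using h3
    calc ∑ g : G, X.character g⁻¹ * Y.character g
        = ∑ g : G, Y.character g * X.character g⁻¹ :=
          Finset.sum_congr rfl fun g _ => mul_comm _ _
      _ = 0 := h2
  rw [hSc, map_smul, LinearMap.trace_id, smul_eq_mul] at htr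
  rcases mul_eq_zero.mp (htr.trans horth) with hc0 | hd0
  · rw [hSc, hc0, zero_smul]
  · have : Subsingleton Y := by
      have := Module.finrank_zero_iff (R := ℂ) (M := Y)
      exact this.mp (by exact_mod_cast hd0)
    exact LinearMap.ext fun x => Subsingleton.elim _ _

lemma aux_conv_zero (X Y : FDRep ℂ G) [Simple X] [Simple Y] (h : ¬ Nonempty (X ≅ Y)) (t : G) :
    ∑ g : G, X.character g⁻¹ * Y.character (t * g) = 0 := by
  have hS := aux_S_zero X Y h
  calc ∑ g : G, X.character g⁻¹ * Y.character (t * g)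
      = ∑ g : G, LinearMap.trace ℂ Y (X.character g⁻¹ • (Y.ρ t * Y.ρ g)) := by
        refine Finset.sum_congr rfl fun g _ => ?_
        rw [map_smul, smul_eq_mul, ← map_mul]
        rfl
    _ = LinearMap.trace ℂ Y (Y.ρ t * ∑ g : G, X.character g⁻¹ • Y.ρ g) := by
        rw [Finset.mul_sum, map_sum]
        exact Finset.sum_congr rfl fun g _ => by rw [mul_smul_comm]
    _ = 0 := by rw [hS, mul_zero, map_zero]

/-- (Theorem 3, orthogonality of projections) For non-isomorphic irreducible complex
representations `X`, `Y` of the finite group `G`, the corresponding projection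
endomorphisms of `V` compose to zero. -/
theorem projection_orthogonal {G : Type} [Group G] [Fintype G]
    (V X Y : FDRep ℂ G) [Simple X] [Simple Y] (h : ¬ Nonempty (X ≅ Y)) :
    (((Module.finrank ℂ X : ℂ) / (Fintype.card G : ℂ)) •
        ∑ g : G, X.character g⁻¹ • V.ρ g) ∘ₗ
      (((Module.finrank ℂ Y : ℂ) / (Fintype.card G : ℂ)) •
        ∑ g : G, Y.character g⁻¹ • V.ρ g) = 0 := by
  have hAB : (∑ g : G, X.character g⁻¹ • V.ρ g) *
      (∑ g : G, Y.character g⁻¹ • V.ρ g) = 0 := by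
    rw [Finset.sum_mul]
    have step : ∀ g : G, (X.character g⁻¹ • V.ρ g) * (∑ h : G, Y.character h⁻¹ • V.ρ h)
        = ∑ k : G, (X.character g⁻¹ * Y.character (k⁻¹ * g)) • V.ρ k := by
      intro g
      rw [Finset.mul_sum]
      refine Fintype.sum_equiv (Equiv.mulLeft g) _ _ fun k => ?_
      simp only [Equiv.coe_mulLeft]
      rw [mul_smul_comm, smul_mul_assoc, smul_smul, ← map_mul, mul_inv_rev,
        inv_mul_cancel_right, mul_comm (Y.character k⁻¹) (X.character g⁻¹)]
    calc ∑ g : G, (X.character g⁻¹ • V.ρ g) * (∑ h : G, Y.character h⁻¹ • V.ρ h)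
        = ∑ g : G, ∑ k : G, (X.character g⁻¹ * Y.character (k⁻¹ * g)) • V.ρ k :=
          Finset.sum_congr rfl fun g _ => step g
      _ = ∑ k : G, ∑ g : G, (X.character g⁻¹ * Y.character (k⁻¹ * g)) • V.ρ k :=
          Finset.sum_comm
      _ = 0 := by
          refine Finset.sum_eq_zero fun k _ => ?_
          rw [← Finset.sum_smul, aux_conv_zero X Y h k⁻¹, zero_smul]
  rw [LinearMap.smul_comp, LinearMap.comp_smul]
  rw [show (∑ g : G, X.character g⁻¹ • V.ρ g) ∘ₗ (∑ g : G, Y.character g⁻¹ • V.ρ g) = 0 from hAB]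
  rw [smul_zero, smul_zero]
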